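/- Fix real constants ρ, α, β, K, R > 0 and discretization steps h, k > 0, and let x, y, θ : ℤ × ℤ → ℝ be discrete fields (first index n = time, second index i = space). Let L_d be the discrete rod Lagrangian assigning to the cell at (n, i) the value (ρ/2h²)[(x_{n+1,i} − x_{n,i})² + (y_{n+1,i} − y_{n,i})²] + (α/2h²)(θ_{n+1,i} − θ_{n,i})² − (β/2k²)(θ_{n,i+1} − θ_{n,i})² − (K/2k⁴)(x_{n,i−1} − 2x_{n,i} + x_{n,i+1})² − (K/2k⁴)(y_{n,i−1} − 2y_{n,i} + y_{n,i+1})², and let the discrete reaction force covectors at (n, i) be Φ¹_{(n,i)} = (1, 0, (R/2k)(y_{n,i+1} − y_{n,i−1})) and Φ²_{(n,i)} = (0, 1, −(R/2k)(x_{n,i+1} − x_{n,i−1})) in the (x, y, θ) components. Then the discrete field (x, y, θ) satisfies the discrete nonholonomic field equations E_{(n,i)} = λ̂_{n,i} Φ¹_{(n,i)} + μ̂_{n,i} Φ²_{(n,i)} for some λ̂, μ̂ : ℤ × ℤ → ℝ if and only if there exist λ, μ : ℤ × ℤ → ℝ such that for all (n, i): ρ(x_{n+1,i} − 2x_{n,i}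 + x_{n−1,i}) = h²λ_{n,i} − (h²K/k⁴)Δ⁴x_{n,i}, ρ(y_{n+1,i} − 2y_{n,i} + y_{n−1,i}) = h²μ_{n,i} − (h²K/k⁴)Δ⁴y_{n,i}, and α(θ_{n+1,i} − 2θ_{n,i} + θ_{n−1,i}) = Rh² [ λ_{n,i}(y_{n,i+1} − y_{n,i−1})/(2k) − μ_{n,i}(x_{n,i+1} − x_{n,i−1})/(2k) ] + (βh²/k²)Δ²θ_{n,i}, where Δ²f_{n,i} := f_{n,i+1} − 2f_{n,i} + f_{n,i−1} and Δ⁴f_{n,i} := f_{n,i+2} − 4f_{n,i+1} + 6f_{n,i} − 4f_{n,i−1} + f_{n,i−2}. -/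

import Mathlib

/-- The values of a discrete field on the 6-cell centered at `(n, i)`:
`((n, i−1), (n, i), (n, i+1), (n+1, i−1), (n+1, i), (n+1, i+1))`. -/
def cellVals {m : ℕ} (φ : ℤ × ℤ → Fin m → ℝ) (p : ℤ × ℤ) : Fin 6 → Fin m → ℝ :=
  ![φ (p.1, p.2 - 1), φ (p.1, p.2), φ (p.1, p.2 + 1),
    φ (p.1 + 1, p.2 - 1), φ (p.1 + 1, p.2), φ (p.1 + 1, p.2 + 1)]

/-- The partial gradient `D_j L_d ∈ ℝ^m` of a discrete Lagrangian with respect to its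
`j`-th slot. -/
noncomputable def Dslot {m : ℕ} (Ld : (Fin 6 → Fin m → ℝ) → ℝ) (j : Fin 6)
    (c : Fin 6 → Fin m → ℝ) (a : Fin m) : ℝ :=
  fderiv ℝ Ld c (Pi.single j (Pi.single a 1))

/-- The discrete Euler–Lagrange expression `E_{(n,i)}(φ)`. -/
noncomputable def discreteEL {m : ℕ} (Ld : (Fin 6 → Fin m → ℝ) → ℝ)
    (φ : ℤ × ℤ → Fin m → ℝ) (p : ℤ × ℤ) (a : Fin m) : ℝ :=
  Dslot Ld 0 (cellVals φ (p.1, p.2 + 1)) a + Dslot Ld 1 (cellVals φ (p.1, p.2)) a +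
    Dslot Ld 2 (cellVals φ (p.1, p.2 - 1)) a + Dslot Ld 3 (cellVals φ (p.1 - 1, p.2 + 1)) a +
    Dslot Ld 4 (cellVals φ (p.1 - 1, p.2)) a + Dslot Ld 5 (cellVals φ (p.1 - 1, p.2 - 1)) a

/-- The discrete Lagrangian of the nonholonomic planar Cosserat rod, as a function of
the values of the field `(x, y, θ)` on a 6-cell (slots `0,1,2` are the values at
`(n, i−1), (n, i), (n, i+1)` and slots `3,4,5` those at
`(n+1, i−1), (n+1, i), (n+1, i+1)`; components `0,1,2` are `x, y, θ`). -/
noncomputable def rodLd (ρ α β K h k : ℝ) : (Fin 6 → Fin 3 → ℝ) → ℝ := fun c =>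
  ρ / (2 * h ^ 2) * ((c 4 0 - c 1 0) ^ 2 + (c 4 1 - c 1 1) ^ 2)
    + α / (2 * h ^ 2) * (c 4 2 - c 1 2) ^ 2
    - β / (2 * k ^ 2) * (c 2 2 - c 1 2) ^ 2
    - K / (2 * k ^ 4) * (c 0 0 - 2 * c 1 0 + c 2 0) ^ 2
    - K / (2 * k ^ 4) * (c 0 1 - 2 * c 1 1 + c 2 1) ^ 2

/-- The discrete field of the rod, with components `(x, y, θ)`. -/
def rodField (x y θ : ℤ → ℤ → ℝ) : ℤ × ℤ → Fin 3 → ℝ := fun p =>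
  ![x p.1 p.2, y p.1 p.2, θ p.1 p.2]

/-!
Every term of `rodLd` is a constant times the square of a linear form in the cell values, so
each partial gradient `D_j L_d` is linear, and summing the six of them around the node `(n, i)`
produces the second time differences together with `Δ⁴x`, `Δ⁴y` and `Δ²θ`. Multiplying the
field equations by `h²` turns them into the finite difference scheme, with multipliers
`λ = -λ̂` and `μ = -μ̂`.
-/

open ContinuousLinearMap

def timeDiff2 (f : ℤ → ℤ → ℝ) (n i : ℤ) : ℝ := f (n + 1) i - 2 * f n i + f (n - 1) i

def spaceDiff2 (f : ℤ → ℤ → ℝ) (n i : ℤ) : ℝ := f n (i + 1) - 2 * f n i + f n (i - 1)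

def spaceDiff4 (f : ℤ → ℤ → ℝ) (n i : ℤ) : ℝ :=
  f n (i + 2) - 4 * f n (i + 1) + 6 * f n i - 4 * f n (i - 1) + f n (i - 2)

lemma hasFDerivAt_apply_apply {𝕜 ι κ F : Type*} [NontriviallyNormedField 𝕜] [Fintype ι]
    [Fintype κ] [NormedAddCommGroup F] [NormedSpace 𝕜 F] (j : ι) (a : κ) (c : ι → κ → F) :
    HasFDerivAt (fun c : ι → κ → F => c j a)
      ((proj a : (κ → F) →L[𝕜] F).comp (proj j)) c :=
  ((proj a : (κ → F) →L[𝕜] F).comp (proj j : (ι → κ → F) →L[𝕜] _)).hasFDerivAt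

lemma fderiv_rodLd_apply (ρ α β K h k : ℝ) (c v : Fin 6 → Fin 3 → ℝ) :
    fderiv ℝ (rodLd ρ α β K h k) c v =
      ρ / h ^ 2 * ((c 4 0 - c 1 0) * (v 4 0 - v 1 0) + (c 4 1 - c 1 1) * (v 4 1 - v 1 1))
      + α / h ^ 2 * (c 4 2 - c 1 2) * (v 4 2 - v 1 2)
      - β / k ^ 2 * (c 2 2 - c 1 2) * (v 2 2 - v 1 2)
      - K / k ^ 4 * (c 0 0 - 2 * c 1 0 + c 2 0) * (v 0 0 - 2 * v 1 0 + v 2 0)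
      - K / k ^ 4 * (c 0 1 - 2 * c 1 1 + c 2 1) * (v 0 1 - 2 * v 1 1 + v 2 1) := by
  have ev (j : Fin 6) (a : Fin 3) := hasFDerivAt_apply_apply (𝕜 := ℝ) j a c
  have kinetic := (((ev 4 0).sub (ev 1 0)).pow 2).add (((ev 4 1).sub (ev 1 1)).pow 2)
  have twist := ((ev 4 2).sub (ev 1 2)).pow 2
  have shear := ((ev 2 2).sub (ev 1 2)).pow 2
  have bendX := (((ev 0 0).sub ((ev 1 0).const_mul 2)).add (ev 2 0)).pow 2
  have bendY := (((ev 0 1).sub ((ev 1 1).const_mul 2)).add (ev 2 1)).pow 2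
  have H : HasFDerivAt (rodLd ρ α β K h k) _ c :=
    ((((kinetic.const_mul (ρ / (2 * h ^ 2))).add (twist.const_mul (α / (2 * h ^ 2)))).sub
      (shear.const_mul (β / (2 * k ^ 2)))).sub (bendX.const_mul (K / (2 * k ^ 4)))).sub
      (bendY.const_mul (K / (2 * k ^ 4)))
  rw [H.fderiv]
  simp only [Pi.sub_apply, Pi.add_apply, Nat.add_one_sub_one, pow_one, nsmul_eq_mul, Nat.cast_ofNat,
    smul_add, sub_apply, add_apply, smul_apply, comp_apply, proj_apply, smul_eq_mul]
  ring

lemma discreteEL_rodLd (ρ α β K h k : ℝ) (x y θ : ℤ → ℤ → ℝ) (n i : ℤ) :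
    discreteEL (rodLd ρ α β K h k) (rodField x y θ) (n, i) =
      ![-(ρ / h ^ 2) * timeDiff2 x n i - K / k ^ 4 * spaceDiff4 x n i,
        -(ρ / h ^ 2) * timeDiff2 y n i - K / k ^ 4 * spaceDiff4 y n i,
        -(α / h ^ 2) * timeDiff2 θ n i + β / k ^ 2 * spaceDiff2 θ n i] := by
  funext a
  fin_cases a <;>
    simp only [discreteEL, Dslot, fderiv_rodLd_apply, cellVals, rodField, timeDiff2, spaceDiff2,
      spaceDiff4, Matrix.cons_val, Pi.single_apply, Fin.reduceEq, Fin.isValue, Fin.zero_eta,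
      Fin.mk_one, Fin.reduceFinMk, Pi.zero_apply, if_true, if_false] <;>
    ring_nf

lemma sq_smul_discreteEL_rodLd {ρ α β K h k : ℝ} (hh : h ≠ 0) (x y θ : ℤ → ℤ → ℝ) (n i : ℤ) :
    h ^ 2 • discreteEL (rodLd ρ α β K h k) (rodField x y θ) (n, i) =
      ![-(ρ * timeDiff2 x n i) - h ^ 2 * K / k ^ 4 * spaceDiff4 x n i,
        -(ρ * timeDiff2 y n i) - h ^ 2 * K / k ^ 4 * spaceDiff4 y n i,
        -(α * timeDiff2 θ n i) + β * h ^ 2 / k ^ 2 * spaceDiff2 θ n i] := by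
  rw [discreteEL_rodLd]
  ext a
  fin_cases a <;>
    simp only [Pi.smul_apply, smul_eq_mul, Matrix.cons_val, Fin.zero_eta, Fin.mk_one,
      Fin.reduceFinMk, Fin.isValue] <;>
    field_simp

lemma discreteEL_rodLd_eq_reaction_iff {ρ α β K R h k : ℝ} (hh : h ≠ 0) (x y θ : ℤ → ℤ → ℝ)
    (n i : ℤ) (lamh muh : ℝ) :
    (∀ a : Fin 3, discreteEL (rodLd ρ α β K h k) (rodField x y θ) (n, i) a
        = lamh * (![1, 0, R / (2 * k) * (y n (i + 1) - y n (i - 1))] : Fin 3 → ℝ) a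
          + muh * (![0, 1, -(R / (2 * k)) * (x n (i + 1) - x n (i - 1))] : Fin 3 → ℝ) a) ↔
      ρ * timeDiff2 x n i = h ^ 2 * -lamh - h ^ 2 * K / k ^ 4 * spaceDiff4 x n i ∧
      ρ * timeDiff2 y n i = h ^ 2 * -muh - h ^ 2 * K / k ^ 4 * spaceDiff4 y n i ∧
      α * timeDiff2 θ n i = R * h ^ 2 * (-lamh * (y n (i + 1) - y n (i - 1)) / (2 * k)
          - -muh * (x n (i + 1) - x n (i - 1)) / (2 * k))
        + β * h ^ 2 / k ^ 2 * spaceDiff2 θ n i := by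
  rw [← funext_iff, ← (smul_right_injective _ (pow_ne_zero 2 hh)).eq_iff,
    sq_smul_discreteEL_rodLd hh, funext_iff]
  simp only [Pi.smul_apply, smul_eq_mul, Fin.forall_fin_succ, Matrix.cons_val_zero, mul_one,
    mul_zero, add_zero, Matrix.cons_val_succ, zero_add, Matrix.cons_val_fin_one, forall_const]
  refine and_congr ?_ (and_congr ?_ ?_) <;> constructor <;> intro H <;> linear_combination -H

theorem discrete_nonholonomic_rod_equations_general
    (ρ α β K R h k : ℝ) (hh : 0 < h) (x y θ : ℤ → ℤ → ℝ) :
    ((∃ lamh muh : ℤ → ℤ → ℝ, ∀ n i : ℤ, ∀ a : Fin 3,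
        discreteEL (rodLd ρ α β K h k) (rodField x y θ) (n, i) a
          = lamh n i * (![1, 0, R / (2 * k) * (y n (i + 1) - y n (i - 1))] : Fin 3 → ℝ) a
            + muh n i *
              (![0, 1, -(R / (2 * k)) * (x n (i + 1) - x n (i - 1))] : Fin 3 → ℝ) a)
      ↔ (∃ lam mu : ℤ → ℤ → ℝ, ∀ n i : ℤ,
          ρ * (x (n + 1) i - 2 * x n i + x (n - 1) i)
            = h ^ 2 * lam n i - h ^ 2 * K / k ^ 4 *
                (x n (i + 2) - 4 * x n (i + 1) + 6 * x n i - 4 * x n (i - 1) + x n (i - 2)) ∧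
          ρ * (y (n + 1) i - 2 * y n i + y (n - 1) i)
            = h ^ 2 * mu n i - h ^ 2 * K / k ^ 4 *
                (y n (i + 2) - 4 * y n (i + 1) + 6 * y n i - 4 * y n (i - 1) + y n (i - 2)) ∧
          α * (θ (n + 1) i - 2 * θ n i + θ (n - 1) i)
            = R * h ^ 2 *
                (lam n i * (y n (i + 1) - y n (i - 1)) / (2 * k)
                  - mu n i * (x n (i + 1) - x n (i - 1)) / (2 * k))
              + β * h ^ 2 / k ^ 2 * (θ n (i + 1) - 2 * θ n i + θ n (i - 1)))) := by
  constructor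
  · rintro ⟨lamh, muh, hEL⟩
    exact ⟨-lamh, -muh, fun n i =>
      (discreteEL_rodLd_eq_reaction_iff hh.ne' x y θ n i _ _).1 (hEL n i)⟩
  · rintro ⟨lam, mu, hscheme⟩
    refine ⟨-lam, -mu, fun n i => (discreteEL_rodLd_eq_reaction_iff hh.ne' x y θ n i _ _).2 ?_⟩
    simpa only [Pi.neg_apply, neg_neg, timeDiff2, spaceDiff2, spaceDiff4] using hscheme n i

/-- the discrete nonholonomic field equations of the discretized
nonholonomic Cosserat rod are equivalent to the explicit second-order finite
difference scheme. -/
theorem discrete_nonholonomic_rod_equations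
    (ρ α β K R h k : ℝ) (hρ : 0 < ρ) (hα : 0 < α) (hβ : 0 < β) (hK : 0 < K)
    (hR : 0 < R) (hh : 0 < h) (hk : 0 < k) (x y θ : ℤ → ℤ → ℝ) :
    ((∃ lamh muh : ℤ → ℤ → ℝ, ∀ n i : ℤ, ∀ a : Fin 3,
        discreteEL (rodLd ρ α β K h k) (rodField x y θ) (n, i) a
          = lamh n i * (![1, 0, R / (2 * k) * (y n (i + 1) - y n (i - 1))] : Fin 3 → ℝ) a
            + muh n i *
              (![0, 1, -(R / (2 * k)) * (x n (i + 1) - x n (i - 1))] : Fin 3 → ℝ) a)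
      ↔ (∃ lam mu : ℤ → ℤ → ℝ, ∀ n i : ℤ,
          ρ * (x (n + 1) i - 2 * x n i + x (n - 1) i)
            = h ^ 2 * lam n i - h ^ 2 * K / k ^ 4 *
                (x n (i + 2) - 4 * x n (i + 1) + 6 * x n i - 4 * x n (i - 1) + x n (i - 2)) ∧
          ρ * (y (n + 1) i - 2 * y n i + y (n - 1) i)
            = h ^ 2 * mu n i - h ^ 2 * K / k ^ 4 *
                (y n (i + 2) - 4 * y n (i + 1) + 6 * y n i - 4 * y n (i - 1) + y n (i - 2)) ∧
          α * (θ (n + 1) i - 2 * θ n i + θ (n - 1) i)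
            = R * h ^ 2 *
                (lam n i * (y n (i + 1) - y n (i - 1)) / (2 * k)
                  - mu n i * (x n (i + 1) - x n (i - 1)) / (2 * k))
              + β * h ^ 2 / k ^ 2 * (θ n (i + 1) - 2 * θ n i + θ n (i - 1)))) :=
  discrete_nonholonomic_rod_equations_general ρ α β K R h k hh x y θ
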